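/- Let E be a real vector space with a nonempty collection 𝒲 of wedges having the (2,n)-Riesz decomposition property for every n ∈ ℕ. Let F be a real vector space with a wedge V such that every nonempty subset A of F admitting an element u with a ≤_V u for all a ∈ A has a multi-supremum with respect to the single wedge V. Then for every family (T_i)_{i∈I} of linear maps E → F and wedges (W_i)_{i∈I} in 𝒲 for which there exists a linear map S : E → F with (S − T_i)(W_i) ⊆ V for all i ∈ I, the family (T_i, L_{W_i,V}(E,F))_{i∈I} has a multi-supremum in L(E,F) with respect to the wedges L_{W_i,V}(E,F). -/

import Mathlib

/-- A wedge in a real vector space: a nonempty subset closed under addition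
and multiplication by nonnegative scalars. -/
def IsWedge {E : Type*} [AddCommGroup E] [Module ℝ E] (W : Set E) : Prop :=
  W.Nonempty ∧ (∀ x ∈ W, ∀ y ∈ W, x + y ∈ W) ∧ ∀ (c : ℝ), 0 ≤ c → ∀ x ∈ W, c • x ∈ W

/-- `u` is a multi-upper bound of the family `(x i, W i)`. -/
def IsMultiUpperBound {E ι : Type*} [AddCommGroup E] [Module ℝ E]
    (x : ι → E) (W : ι → Set E) (u : E) : Prop :=
  ∀ i, u - x i ∈ W i

/-- `z` is a multi-supremum of the family `(x i, W i)`. -/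
def IsMultiSup {E ι : Type*} [AddCommGroup E] [Module ℝ E]
    (x : ι → E) (W : ι → Set E) (z : E) : Prop :=
  IsMultiUpperBound x W z ∧ ∀ u, IsMultiUpperBound x W u → ∀ i, u - z ∈ W i


/-- `∑_{i ∈ I} W i` : the set of all finite (nonempty) sums of elements of `⋃ i, W i`. -/
def wedgeSum {E ι : Type*} [AddCommGroup E] [Module ℝ E] (W : ι → Set E) : Set E :=
  {x | ∃ l : List E, l ≠ [] ∧ (∀ y ∈ l, y ∈ ⋃ i, W i) ∧ l.sum = x}

/-- The collection `𝒲` of wedges has the (2,n)-Riesz decomposition property for every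
`n ∈ ℕ`: for every finite collection `(W j)` of wedges from `𝒲`, whenever
`x₁, x₂ ∈ ∑ j, W j` and `y j ∈ W j` satisfy `x₁ + x₂ = ∑ j, y j`, there is a
decomposition `z₁ j, z₂ j ∈ W j` with `x₁ = ∑ j, z₁ j`, `x₂ = ∑ j, z₂ j` and
`y j = z₁ j + z₂ j` for all `j`. -/
def HasRDP2 {E : Type*} [AddCommGroup E] [Module ℝ E] (𝒲 : Set (Set E)) : Prop :=
  ∀ (n : ℕ) (W : Fin n → Set E), (∀ j, W j ∈ 𝒲) →
    ∀ x₁ x₂ : E, x₁ ∈ wedgeSum W → x₂ ∈ wedgeSum W →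
    ∀ y : Fin n → E, (∀ j, y j ∈ W j) → x₁ + x₂ = ∑ j, y j →
    ∃ z₁ z₂ : Fin n → E, (∀ j, z₁ j ∈ W j) ∧ (∀ j, z₂ j ∈ W j) ∧
      x₁ = ∑ j, z₁ j ∧ x₂ = ∑ j, z₂ j ∧ ∀ j, y j = z₁ j + z₂ j

/-!
For `x` in the cone generated by the `W i`, let `A x` be the set of sums `∑ₖ T iₖ wₖ` over all
decompositions `x = ∑ₖ wₖ` with `wₖ ∈ W iₖ`; the multi-supremum is the Riesz–Kantorovich operator
`R x = sup A x`. The sets `A x` are bounded above by `S x`, so `V`-suprema exist, and the Riesz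
decomposition property gives `A (x + y) = A x + A y`, so suprema are additive. Suprema are only
unique modulo the lineality space `V ∩ -V`; composing with a linear choice of representatives
modulo it makes `x ↦ sup A x` additive and positively homogeneous on the cone, hence the
restriction of a linear map on `E`.
-/

open Pointwise

section

variable {E F : Type*} [AddCommGroup E] [Module ℝ E] [AddCommGroup F] [Module ℝ F]

section Wedge

variable {V : Set F}

theorem IsWedge.zero_mem (hV : IsWedge V) : (0 : F) ∈ V := by
  obtain ⟨v, hv⟩ := hV.1
  simpa using hV.2.2 0 le_rfl v hv

theorem IsWedge.add_mem (hV : IsWedge V) {x y : F} (hx : x ∈ V) (hy : y ∈ V) : x + y ∈ V :=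
  hV.2.1 x hx y hy

theorem IsWedge.smul_mem (hV : IsWedge V) {c : ℝ} (hc : 0 ≤ c) {x : F} (hx : x ∈ V) :
    c • x ∈ V :=
  hV.2.2 c hc x hx

def IsWedge.toPointedCone (hV : IsWedge V) : PointedCone ℝ F where
  carrier := V
  add_mem' := hV.add_mem
  zero_mem' := hV.zero_mem
  smul_mem' c _ hx := hV.smul_mem c.2 hx

@[simp]
theorem IsWedge.mem_toPointedCone (hV : IsWedge V) {x : F} : x ∈ hV.toPointedCone ↔ x ∈ V :=
  Iff.rfl

end Wedge

def IsWedgeSup (V A : Set F) (z : F) : Prop :=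
  (∀ a ∈ A, z - a ∈ V) ∧ ∀ u, (∀ a ∈ A, u - a ∈ V) → u - z ∈ V

namespace IsWedgeSup

variable {V A B : Set F} {z z' : F}

theorem sub_mem_lineal (hV : IsWedge V) (h : IsWedgeSup V A z) (h' : IsWedgeSup V A z') :
    z - z' ∈ hV.toPointedCone.lineal :=
  ⟨h'.2 z h.1, by simpa using h.2 z' h'.1⟩

theorem of_sub_mem_lineal (hV : IsWedge V) (h : IsWedgeSup V A z)
    (hz : z - z' ∈ hV.toPointedCone.lineal) : IsWedgeSup V A z' := by
  obtain ⟨hzz', hz'z⟩ := hz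
  refine ⟨fun a ha => ?_, fun u hu => ?_⟩
  · convert hV.add_mem hz'z (h.1 a ha) using 1
    abel
  · convert hV.add_mem (h.2 u hu) hzz' using 1
    abel

theorem add (hV : IsWedge V) (h : IsWedgeSup V A z) (h' : IsWedgeSup V B z') :
    IsWedgeSup V (A + B) (z + z') := by
  refine ⟨?_, fun u hu => ?_⟩
  · rintro _ ⟨a, ha, b, hb, rfl⟩
    rw [add_sub_add_comm]
    exact hV.add_mem (h.1 a ha) (h'.1 b hb)
  · have hA : ∀ a ∈ A, u - z' - a ∈ V := fun a ha => by
      have hB : ∀ b ∈ B, u - a - b ∈ V := fun b hb => by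
        simpa [sub_sub] using hu (a + b) (Set.add_mem_add ha hb)
      simpa [sub_right_comm u a z'] using h'.2 (u - a) hB
    simpa [sub_sub, add_comm z z'] using h.2 _ hA

theorem smul (hV : IsWedge V) (h : IsWedgeSup V A z) {c : ℝ} (hc : 0 < c) :
    IsWedgeSup V (c • A) (c • z) := by
  refine ⟨?_, fun u hu => ?_⟩
  · rintro _ ⟨a, ha, rfl⟩
    simpa [smul_sub] using hV.smul_mem hc.le (h.1 a ha)
  · have hA : ∀ a ∈ A, c⁻¹ • u - a ∈ V := fun a ha => by
      have := hV.smul_mem (inv_nonneg.2 hc.le) (hu (c • a) (Set.smul_mem_smul_set ha))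
      rwa [smul_sub, smul_smul, inv_mul_cancel₀ hc.ne', one_smul] at this
    have := hV.smul_mem hc.le (h.2 _ hA)
    rwa [smul_sub, smul_smul, mul_inv_cancel₀ hc.ne', one_smul] at this

end IsWedgeSup

theorem Submodule.exists_linearMap_eq_zero_and_sub_mem {K M : Type*} [Field K] [AddCommGroup M]
    [Module K M] (L : Submodule K M) :
    ∃ P : M →ₗ[K] M, (∀ v ∈ L, P v = 0) ∧ ∀ v, v - P v ∈ L := by
  obtain ⟨s, hs⟩ := L.mkQ.exists_rightInverse_of_surjective L.range_mkQ
  refine ⟨s ∘ₗ L.mkQ, fun v hv => by simp [(Submodule.Quotient.mk_eq_zero L).2 hv], fun v => ?_⟩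
  rw [← Submodule.Quotient.eq]
  exact (LinearMap.congr_fun hs (Submodule.Quotient.mk v)).symm

namespace PointedCone

variable (C : PointedCone ℝ E)

theorem mem_span_iff_exists_sub {x : E} :
    x ∈ Submodule.span ℝ (C : Set E) ↔ ∃ a ∈ C, ∃ b ∈ C, a - b = x := by
  refine ⟨fun hx => ?_, ?_⟩
  · induction hx using Submodule.span_induction with
    | mem x hx => exact ⟨x, hx, 0, C.zero_mem, sub_zero x⟩
    | zero => exact ⟨0, C.zero_mem, 0, C.zero_mem, sub_zero 0⟩
    | add x y _ _ hx hy =>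
      obtain ⟨a, ha, b, hb, rfl⟩ := hx
      obtain ⟨a', ha', b', hb', rfl⟩ := hy
      exact ⟨a + a', C.add_mem ha ha', b + b', C.add_mem hb hb', by abel⟩
    | smul c x _ hx =>
      obtain ⟨a, ha, b, hb, rfl⟩ := hx
      rcases le_total 0 c with hc | hc
      · exact ⟨c • a, C.smul_mem hc ha, c • b, C.smul_mem hc hb, (smul_sub c a b).symm⟩
      · refine ⟨(-c) • b, C.smul_mem (neg_nonneg.2 hc) hb,
          (-c) • a, C.smul_mem (neg_nonneg.2 hc) ha, ?_⟩
        rw [← smul_sub, neg_smul, ← smul_neg, neg_sub]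
  · rintro ⟨a, ha, b, hb, rfl⟩
    exact Submodule.sub_mem _ (Submodule.subset_span ha) (Submodule.subset_span hb)

variable {C} {f : E → F}

theorem exists_linearMap_span_eqOn (hadd : ∀ x ∈ C, ∀ y ∈ C, f (x + y) = f x + f y)
    (hsmul : ∀ c : ℝ, 0 < c → ∀ x ∈ C, f (c • x) = c • f x) :
    ∃ g : Submodule.span ℝ (C : Set E) →ₗ[ℝ] F,
      ∀ x (hx : x ∈ C), g ⟨x, Submodule.subset_span hx⟩ = f x := by
  have hzero : f 0 = 0 := by simpa using hadd 0 C.zero_mem 0 C.zero_mem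
  have hsmul_nonneg : ∀ c : ℝ, 0 ≤ c → ∀ x ∈ C, f (c • x) = c • f x := fun c hc x hx => by
    rcases hc.eq_or_lt with rfl | hc
    · simp [hzero]
    · exact hsmul c hc x hx
  choose a ha b hb hab using fun d : Submodule.span ℝ (C : Set E) => C.mem_span_iff_exists_sub.1 d.2
  have hsplit : ∀ d : Submodule.span ℝ (C : Set E), ∀ x ∈ C, ∀ y ∈ C, x - y = d →
      f (a d) - f (b d) = f x - f y := by
    intro d x hx y hy hxy
    have hd := hab d
    rw [← hxy, sub_eq_sub_iff_add_eq_add] at hd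
    rw [sub_eq_sub_iff_add_eq_add, ← hadd _ (ha d) y hy, ← hadd x hx _ (hb d), hd]
  let g : Submodule.span ℝ (C : Set E) →ₗ[ℝ] F :=
    { toFun := fun d => f (a d) - f (b d)
      map_add' := fun d e => by
        rw [hsplit (d + e) _ (C.add_mem (ha d) (ha e)) _ (C.add_mem (hb d) (hb e))
          (by rw [Submodule.coe_add, ← hab d, ← hab e]; abel),
          hadd _ (ha d) _ (ha e), hadd _ (hb d) _ (hb e)]
        abel
      map_smul' := fun c d => by
        rcases le_total 0 c with hc | hc
        · rw [hsplit (c • d) _ (C.smul_mem hc (ha d)) _ (C.smul_mem hc (hb d))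
            (by rw [Submodule.coe_smul, ← hab d, smul_sub]),
            hsmul_nonneg c hc _ (ha d), hsmul_nonneg c hc _ (hb d), RingHom.id_apply, smul_sub]
        · rw [hsplit (c • d) _ (C.smul_mem (neg_nonneg.2 hc) (hb d)) _
            (C.smul_mem (neg_nonneg.2 hc) (ha d))
            (by rw [Submodule.coe_smul, ← hab d, ← smul_sub, neg_smul, ← smul_neg, neg_sub]),
            hsmul_nonneg _ (neg_nonneg.2 hc) _ (hb d), hsmul_nonneg _ (neg_nonneg.2 hc) _ (ha d),
            RingHom.id_apply, ← smul_sub, neg_smul, ← smul_neg, neg_sub] }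
  exact ⟨g, fun x hx =>
    (hsplit _ x hx 0 C.zero_mem (sub_zero x)).trans (by rw [hzero, sub_zero])⟩

theorem exists_linearMap_eqOn (hadd : ∀ x ∈ C, ∀ y ∈ C, f (x + y) = f x + f y)
    (hsmul : ∀ c : ℝ, 0 < c → ∀ x ∈ C, f (c • x) = c • f x) :
    ∃ g : E →ₗ[ℝ] F, ∀ x ∈ C, g x = f x := by
  obtain ⟨g₀, hg₀⟩ := exists_linearMap_span_eqOn hadd hsmul
  obtain ⟨g, hg⟩ := LinearMap.exists_extend g₀
  exact ⟨g, fun x hx => (LinearMap.congr_fun hg _).trans (hg₀ x hx)⟩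

end PointedCone

theorem exists_linearMap_isWedgeSup {V : Set F} (hV : IsWedge V) (C : PointedCone ℝ E)
    (A : E → Set F) (hadd : ∀ x ∈ C, ∀ y ∈ C, A (x + y) = A x + A y)
    (hsmul : ∀ c : ℝ, 0 < c → ∀ x ∈ C, A (c • x) = c • A x)
    (hsup : ∀ x ∈ C, ∃ z, IsWedgeSup V (A x) z) :
    ∃ R : E →ₗ[ℝ] F, ∀ x ∈ C, IsWedgeSup V (A x) (R x) := by
  obtain ⟨P, hP0, hP⟩ := hV.toPointedCone.lineal.exists_linearMap_eq_zero_and_sub_mem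
  have hPeq : ∀ {B z z'}, IsWedgeSup V B z → IsWedgeSup V B z' → P z = P z' := fun h h' =>
    sub_eq_zero.1 (by rw [← map_sub]; exact hP0 _ (h.sub_mem_lineal hV h'))
  choose! z hz using hsup
  obtain ⟨R, hR⟩ := C.exists_linearMap_eqOn (f := fun x => P (z x))
    (fun x hx y hy => by
      rw [← map_add]
      exact hPeq (hz _ (C.add_mem hx hy)) (hadd x hx y hy ▸ (hz x hx).add hV (hz y hy)))
    (fun c hc x hx => by
      rw [← map_smul]
      exact hPeq (hz _ (C.smul_mem hc.le hx)) (hsmul c hc x hx ▸ (hz x hx).smul hV hc))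
  exact ⟨R, fun x hx => hR x hx ▸ (hz x hx).of_sub_mem_lineal hV (hP _)⟩

theorem HasRDP2.exists_split {𝒲 : Set (Set E)} (hRDP : HasRDP2 𝒲) {κ : Type*} [Fintype κ]
    {W : κ → Set E} (hW : ∀ k, W k ∈ 𝒲) {a b y : κ → E} (ha : ∀ k, a k ∈ W k)
    (hb : ∀ k, b k ∈ W k) (hy : ∀ k, y k ∈ W k) (hsum : ∑ k, a k + ∑ k, b k = ∑ k, y k) :
    ∃ z₁ z₂ : κ → E, (∀ k, z₁ k ∈ W k) ∧ (∀ k, z₂ k ∈ W k) ∧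
      ∑ k, z₁ k = ∑ k, a k ∧ ∑ k, z₂ k = ∑ k, b k ∧ ∀ k, y k = z₁ k + z₂ k := by
  cases isEmpty_or_nonempty κ
  · exact ⟨a, b, ha, hb, rfl, rfl, fun k => isEmptyElim k⟩
  let e := (Fintype.equivFin κ).symm
  have mem_wedgeSum : ∀ c : κ → E, (∀ k, c k ∈ W k) → ∑ k, c k ∈ wedgeSum (W ∘ e) :=
    fun c hc => ⟨List.ofFn fun j => c (e j), by simp [Fintype.card_ne_zero],
      fun v hv => by
        obtain ⟨j, rfl⟩ := List.mem_ofFn.1 hv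
        exact Set.mem_iUnion_of_mem j (hc _),
      by rw [List.sum_ofFn, e.sum_comp]⟩
  obtain ⟨z₁, z₂, hz₁, hz₂, h₁, h₂, hyz⟩ := hRDP _ (W ∘ e) (fun j => hW _) _ _
    (mem_wedgeSum a ha) (mem_wedgeSum b hb) (fun j => y (e j)) (fun j => hy _)
    (by rw [hsum, e.sum_comp])
  refine ⟨fun k => z₁ (e.symm k), fun k => z₂ (e.symm k), fun k => ?_, fun k => ?_, ?_, ?_,
    fun k => ?_⟩
  · simpa using hz₁ (e.symm k)
  · simpa using hz₂ (e.symm k)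
  · rw [h₁, e.symm.sum_comp]
  · rw [h₂, e.symm.sum_comp]
  · simpa using hyz (e.symm k)

section RieszKantorovich

variable {ι : Type*}

def rieszKantorovichSet (T : ι → E →ₗ[ℝ] F) (W : ι → Set E) (x : E) : Set F :=
  {f | ∃ (n : ℕ) (i : Fin n → ι) (w : Fin n → E),
    (∀ j, w j ∈ W (i j)) ∧ ∑ j, w j = x ∧ ∑ j, T (i j) (w j) = f}

variable {T : ι → E →ₗ[ℝ] F} {W : ι → Set E}

theorem sum_mem_rieszKantorovichSet {κ : Type*} [Fintype κ] (i : κ → ι) {w : κ → E}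
    (hw : ∀ k, w k ∈ W (i k)) :
    ∑ k, T (i k) (w k) ∈ rieszKantorovichSet T W (∑ k, w k) := by
  let e := (Fintype.equivFin κ).symm
  exact ⟨Fintype.card κ, i ∘ e, w ∘ e, fun j => hw (e j), e.sum_comp w,
    e.sum_comp fun k => T (i k) (w k)⟩

theorem apply_mem_rieszKantorovichSet {i : ι} {w : E} (hw : w ∈ W i) :
    T i w ∈ rieszKantorovichSet T W w := by
  simpa using sum_mem_rieszKantorovichSet (T := T) (fun _ : Unit => i) fun _ => hw

theorem rieszKantorovichSet_add_subset (x y : E) :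
    rieszKantorovichSet T W x + rieszKantorovichSet T W y ⊆ rieszKantorovichSet T W (x + y) := by
  rintro _ ⟨_, ⟨n, i, w, hw, rfl, rfl⟩, _, ⟨m, i', w', hw', rfl, rfl⟩, rfl⟩
  simpa [Fintype.sum_sum_type] using
    sum_mem_rieszKantorovichSet (T := T) (Sum.elim i i') (w := Sum.elim w w')
      (by rintro (k | k) <;> simp [hw, hw'])

theorem smul_mem_rieszKantorovichSet (hW : ∀ i, IsWedge (W i)) {c : ℝ} (hc : 0 ≤ c) {x : E}
    {f : F} (hf : f ∈ rieszKantorovichSet T W x) :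
    c • f ∈ rieszKantorovichSet T W (c • x) := by
  obtain ⟨n, i, w, hw, rfl, rfl⟩ := hf
  simpa [Finset.smul_sum] using
    sum_mem_rieszKantorovichSet (T := T) i (w := fun j => c • w j)
      fun j => (hW _).smul_mem hc (hw j)

theorem rieszKantorovichSet_smul (hW : ∀ i, IsWedge (W i)) {c : ℝ} (hc : 0 < c) (x : E) :
    rieszKantorovichSet T W (c • x) = c • rieszKantorovichSet T W x := by
  refine subset_antisymm (fun f hf => ⟨c⁻¹ • f, ?_, smul_inv_smul₀ hc.ne' f⟩) ?_
  · rintro _ ⟨f, hf, rfl⟩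
    exact smul_mem_rieszKantorovichSet hW hc.le hf
  · simpa [smul_smul, hc.ne'] using smul_mem_rieszKantorovichSet hW (inv_nonneg.2 hc.le) hf

theorem rieszKantorovichSet_nonempty (hW : ∀ i, IsWedge (W i)) {x : E}
    (hx : x ∈ PointedCone.hull ℝ (⋃ i, W i)) : (rieszKantorovichSet T W x).Nonempty := by
  induction hx using Submodule.span_induction with
  | mem x hx =>
    obtain ⟨i, hi⟩ := Set.mem_iUnion.1 hx
    exact ⟨_, apply_mem_rieszKantorovichSet hi⟩
  | zero => exact ⟨0, 0, Fin.elim0, Fin.elim0, finZeroElim, by simp, by simp⟩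
  | add x y _ _ hx hy => exact (hx.add hy).mono (rieszKantorovichSet_add_subset x y)
  | smul c x _ hx =>
    obtain ⟨f, hf⟩ := hx
    exact ⟨_, smul_mem_rieszKantorovichSet hW c.2 hf⟩

theorem sub_mem_of_mem_rieszKantorovichSet {V : Set F} (hV : IsWedge V) {U : E →ₗ[ℝ] F}
    (hU : ∀ i, ∀ w ∈ W i, (U - T i) w ∈ V) {x : E} {f : F}
    (hf : f ∈ rieszKantorovichSet T W x) : U x - f ∈ V := by
  obtain ⟨n, i, w, hw, rfl, rfl⟩ := hf
  simpa [Finset.sum_sub_distrib] using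
    hV.toPointedCone.sum_mem (t := Finset.univ) fun j _ => hU (i j) (w j) (hw j)

theorem rieszKantorovichSet_add {𝒲 : Set (Set E)} (hRDP : HasRDP2 𝒲) (hW𝒲 : ∀ i, W i ∈ 𝒲)
    (hW : ∀ i, IsWedge (W i)) {x y : E} (hx : (rieszKantorovichSet T W x).Nonempty)
    (hy : (rieszKantorovichSet T W y).Nonempty) :
    rieszKantorovichSet T W (x + y) = rieszKantorovichSet T W x + rieszKantorovichSet T W y := by
  refine subset_antisymm (fun f hf => ?_) (rieszKantorovichSet_add_subset x y)
  obtain ⟨_, n₁, i₁, u, hu, rfl, -⟩ := hx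
  obtain ⟨_, n₂, i₂, v, hv, rfl, -⟩ := hy
  obtain ⟨n, i, w, hw, hwsum, rfl⟩ := hf
  -- The Riesz decomposition needs `x`, `y` and `w` over one family of wedges: index the three
  -- decompositions together, padding each with zeros.
  let I : Fin n ⊕ Fin n₁ ⊕ Fin n₂ → ι := Sum.elim i (Sum.elim i₁ i₂)
  have h0 : ∀ i, (0 : E) ∈ W i := fun i => (hW i).zero_mem
  obtain ⟨z₁, z₂, hz₁, hz₂, h₁, h₂, hyz⟩ := hRDP.exists_split (W := W ∘ I) (fun k => hW𝒲 _)
    (a := Sum.elim 0 (Sum.elim u 0)) (b := Sum.elim 0 (Sum.elim 0 v)) (y := Sum.elim w 0)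
    (by rintro (k | k | k) <;> simp [I, hu, h0]) (by rintro (k | k | k) <;> simp [I, hv, h0])
    (by rintro (k | k | k) <;> simp [I, hw, h0]) (by simp [Fintype.sum_sum_type, hwsum])
  have hz₁u : ∑ k, z₁ k = ∑ j, u j := by simpa [Fintype.sum_sum_type] using h₁
  have hz₂v : ∑ k, z₂ k = ∑ j, v j := by simpa [Fintype.sum_sum_type] using h₂
  refine ⟨_, hz₁u ▸ sum_mem_rieszKantorovichSet I hz₁, _,
    hz₂v ▸ sum_mem_rieszKantorovichSet I hz₂, ?_⟩
  calc ∑ k, T (I k) (z₁ k) + ∑ k, T (I k) (z₂ k) = ∑ k, T (I k) (Sum.elim w 0 k) := by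
        simp only [hyz, map_add, Finset.sum_add_distrib]
    _ = ∑ j, T (i j) (w j) := by simp [Fintype.sum_sum_type, I]

end RieszKantorovich

end

theorem stmt_14_general {E F ι : Type*} [AddCommGroup E] [Module ℝ E] [AddCommGroup F] [Module ℝ F]
    (𝒲 : Set (Set E)) (h𝒲 : ∀ W ∈ 𝒲, IsWedge W)
    (hRDP : HasRDP2 𝒲)
    (V : Set F) (hV : IsWedge V)
    (hDC : ∀ A : Set F, A.Nonempty → (∃ u, ∀ a ∈ A, u - a ∈ V) →
      ∃ z, (∀ a ∈ A, z - a ∈ V) ∧ ∀ u, (∀ a ∈ A, u - a ∈ V) → u - z ∈ V)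
    (T : ι → E →ₗ[ℝ] F) (W : ι → Set E) (hWi : ∀ i, W i ∈ 𝒲)
    (S : E →ₗ[ℝ] F) (hS : ∀ i, ∀ x ∈ W i, (S - T i) x ∈ V) :
    ∃ R : E →ₗ[ℝ] F,
      IsMultiSup T (fun i => {U : E →ₗ[ℝ] F | ∀ x ∈ W i, U x ∈ V}) R := by
  have hW i : IsWedge (W i) := h𝒲 _ (hWi i)
  let C := PointedCone.hull ℝ (⋃ i, W i)
  have hWC i : W i ⊆ C := fun _ hw => PointedCone.subset_hull (Set.mem_iUnion_of_mem i hw)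
  obtain ⟨R, hR⟩ := exists_linearMap_isWedgeSup hV C (rieszKantorovichSet T W)
    (fun x hx y hy => rieszKantorovichSet_add hRDP hWi hW
      (rieszKantorovichSet_nonempty hW hx) (rieszKantorovichSet_nonempty hW hy))
    (fun c hc x _ => rieszKantorovichSet_smul hW hc x)
    (fun x hx => hDC _ (rieszKantorovichSet_nonempty hW hx)
      ⟨S x, fun _ hf => sub_mem_of_mem_rieszKantorovichSet hV hS hf⟩)
  refine ⟨R, fun i w hw => ?_, fun U hU i w hw => ?_⟩
  · exact (hR w (hWC i hw)).1 _ (apply_mem_rieszKantorovichSet hw)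
  · exact (hR w (hWC i hw)).2 _ fun _ hf => sub_mem_of_mem_rieszKantorovichSet hV hU hf

theorem stmt_14 {E F ι : Type*} [AddCommGroup E] [Module ℝ E] [AddCommGroup F] [Module ℝ F]
    (𝒲 : Set (Set E)) (h𝒲ne : 𝒲.Nonempty) (h𝒲 : ∀ W ∈ 𝒲, IsWedge W)
    (hRDP : HasRDP2 𝒲)
    (V : Set F) (hV : IsWedge V)
    (hDC : ∀ A : Set F, A.Nonempty → (∃ u, ∀ a ∈ A, u - a ∈ V) →
      ∃ z, (∀ a ∈ A, z - a ∈ V) ∧ ∀ u, (∀ a ∈ A, u - a ∈ V) → u - z ∈ V)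
    (T : ι → E →ₗ[ℝ] F) (W : ι → Set E) (hWi : ∀ i, W i ∈ 𝒲)
    (S : E →ₗ[ℝ] F) (hS : ∀ i, ∀ x ∈ W i, (S - T i) x ∈ V) :
    ∃ R : E →ₗ[ℝ] F,
      IsMultiSup T (fun i => {U : E →ₗ[ℝ] F | ∀ x ∈ W i, U x ∈ V}) R :=
  stmt_14_general 𝒲 h𝒲 hRDP V hV hDC T W hWi S hS
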